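/- Let (A,≻,≺) be a dendriform algebra over a field of characteristic zero. Then (A,▷,◁) with x▷y = x≻y and x◁y = x≺y is an L-dendriform algebra. -/

import Mathlib

/-- A dendriform algebra structure: two bilinear operations `succ` (`≻`) and
`prec` (`≺`) satisfying the three dendriform identities, where `x∗y = x≺y + x≻y`. -/
def IsDendriform {K A : Type*} [Field K] [AddCommGroup A] [Module K A]
    (succ prec : A →ₗ[K] A →ₗ[K] A) : Prop :=
  (∀ x y z : A, prec (prec x y) z = prec x (prec y z + succ y z)) ∧
  (∀ x y z : A, prec (succ x y) z = succ x (prec y z)) ∧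
  (∀ x y z : A, succ x (succ y z) = succ (prec x y + succ x y) z)

/-- An L-dendriform algebra structure. -/
def IsLDendriform {K A : Type*} [Field K] [AddCommGroup A] [Module K A]
    (tr tl : A →ₗ[K] A →ₗ[K] A) : Prop :=
  (∀ x y z : A, tr x (tr y z) =
      tr (tr x y) z + tr (tl x y) z + tr y (tr x z) - tr (tl y x) z - tr (tr y x) z) ∧
  (∀ x y z : A, tr x (tl y z) =
      tl (tr x y) z + tl y (tr x z) + tl y (tl x z) - tl (tl y x) z)

/-!
The third dendriform axiom says that `x ↦ (x ≻ ·)` turns `∗` into composition, so the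
commutator `[x ≻ ·, y ≻ ·]` is left `≻`-multiplication by `x ∗ y - y ∗ x`; this is the first
L-dendriform identity. For the second, the middle axiom rewrites `x ≻ (y ≺ z)` as
`(x ≻ y) ≺ z`, and the first axiom for `y, x, z` makes the two terms
`y ≺ (x ≻ z) + y ≺ (x ≺ z)` and `(y ≺ x) ≺ z` cancel.
-/

section

variable {R A : Type*} [CommSemiring R] [AddCommGroup A] [Module R A]
  {succ prec : A →ₗ[R] A →ₗ[R] A}

theorem succ_succ_eq_of_succ_succ_eq_succ_add
    (h : ∀ x y z : A, succ x (succ y z) = succ (prec x y + succ x y) z) (x y z : A) :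
    succ x (succ y z) = succ (succ x y) z + succ (prec x y) z + succ y (succ x z) -
      succ (prec y x) z - succ (succ y x) z := by
  rw [h x y z, h y x z]
  simp only [map_add, LinearMap.add_apply]
  abel

theorem succ_prec_eq_of_prec_prec_of_prec_succ
    (hprec : ∀ x y z : A, prec (prec x y) z = prec x (prec y z + succ y z))
    (hmid : ∀ x y z : A, prec (succ x y) z = succ x (prec y z)) (x y z : A) :
    succ x (prec y z) = prec (succ x y) z + prec y (succ x z) + prec y (prec x z) -
      prec (prec y x) z := by
  rw [← hmid x y z, hprec y x z]
  simp only [map_add]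
  abel

end

theorem LDendriform_of_dendriform_general {K A : Type*} [Field K]
    [AddCommGroup A] [Module K A]
    (succ prec : A →ₗ[K] A →ₗ[K] A) (h : IsDendriform succ prec) :
    IsLDendriform succ prec := by
  obtain ⟨hprec, hmid, hsucc⟩ := h
  exact ⟨succ_succ_eq_of_succ_succ_eq_succ_add hsucc,
    succ_prec_eq_of_prec_prec_of_prec_succ hprec hmid⟩

/-- Any dendriform algebra `(A,≻,≺)` over a field of characteristic
zero is an L-dendriform algebra with `x▷y = x≻y` and `x◁y = x≺y`. -/
theorem LDendriform_of_dendriform {K A : Type*} [Field K] [CharZero K]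
    [AddCommGroup A] [Module K A]
    (succ prec : A →ₗ[K] A →ₗ[K] A) (h : IsDendriform succ prec) :
    IsLDendriform succ prec :=
  LDendriform_of_dendriform_general succ prec h
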